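/- arXiv:1707.06261 — 2 statements merged into one kernel-verified Lean document; each statement's English description precedes it below -/
import Mathlib

section
/- An arrangement of $m$ hyperplanes in $\mathbb{R}^D$ partitions $\mathbb{R}^D$ into at most $\sum_{j=0}^{D} \binom{m}{j}$ connected regions (cells of the complement of the union of the hyperplanes). -/
/-!
Index the regions by sign vectors: a region of the complement of the hyperplanes `f i = c i` is
exactly the set of points where each `f i - c i` has a prescribed sign, since such a set is
convex (hence connected) and no connected subset of the complement can change a sign. So it
suffices to count the realizable sign vectors. Splitting them according to the sign of the
first functional, the vectors realized with both signs are realized on the hyperplane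
`f 0 = c 0`, an arrangement of `m - 1` hyperplanes in dimension `D - 1`. The count for `(m, D)`
is thus at most the counts for `(m - 1, D)` and `(m - 1, D - 1)` together, and Pascal's rule
turns this recursion into the bound `∑_{j ≤ D} (m choose j)`.
-/

open Finset in
theorem Nat.sum_range_succ_choose_succ (m D : ℕ) :
    ∑ j ∈ range (D + 1), (m + 1).choose j
      = ∑ j ∈ range (D + 1), m.choose j + ∑ j ∈ range D, m.choose j := by
  rw [sum_range_succ', sum_range_succ' (fun j => m.choose j)]
  simp only [Nat.choose_succ_succ', sum_add_distrib, Nat.choose_zero_right]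
  ring

theorem Set.ncard_le_ncard_image_tail_add {n : ℕ} (S : Set (Fin (n + 1) → Bool)) :
    S.ncard ≤ (Fin.tail '' S).ncard
      + {t | Fin.cons true t ∈ S ∧ Fin.cons false t ∈ S}.ncard := by
  set T : Bool → Set (Fin n → Bool) := fun b => {t | Fin.cons b t ∈ S}
  have hS : S ⊆ Fin.cons true '' T true ∪ Fin.cons false '' T false := by
    intro s hs
    rw [← Fin.cons_self_tail s] at hs ⊢
    cases hb : s 0 <;> rw [hb] at hs
    · exact Or.inr ⟨_, hs, rfl⟩
    · exact Or.inl ⟨_, hs, rfl⟩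
  have hT : T true ∪ T false ⊆ Fin.tail '' S := by
    rintro t (ht | ht) <;> exact ⟨_, ht, Fin.tail_cons _ _⟩
  calc S.ncard ≤ (T true).ncard + (T false).ncard := by
        refine (Set.ncard_le_ncard hS).trans ((Set.ncard_union_le _ _).trans_eq ?_)
        rw [Set.ncard_image_of_injective _ (Fin.cons_right_injective _),
          Set.ncard_image_of_injective _ (Fin.cons_right_injective _)]
    _ = (T true ∪ T false).ncard + (T true ∩ T false).ncard :=
        (Set.ncard_union_add_ncard_inter _ _).symm
    _ ≤ _ := add_le_add_left (Set.ncard_le_ncard hT) _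

theorem Convex.exists_mem_eq_of_lt_of_lt {E : Type*} [AddCommGroup E] [Module ℝ E]
    {S : Set E} (hS : Convex ℝ S) (g : E →ₗ[ℝ] ℝ) {x y : E} (hx : x ∈ S) (hy : y ∈ S)
    {r : ℝ} (hxr : g x < r) (hry : r < g y) : ∃ z ∈ S, g z = r := by
  have hxy : 0 < g y - g x := by linarith
  refine ⟨((g y - r) / (g y - g x)) • x + ((r - g x) / (g y - g x)) • y,
    hS hx hy (div_nonneg (by linarith) hxy.le) (div_nonneg (by linarith) hxy.le) ?_, ?_⟩
  · field_simp
    ring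
  · simp only [map_add, map_smul, smul_eq_mul]
    field_simp
    ring

theorem IsPreconnected.lt_of_lt_of_forall_ne {E : Type*} [TopologicalSpace E] {S : Set E}
    (hS : IsPreconnected S) {g : E → ℝ} (hg : ContinuousOn g S) {r : ℝ}
    (hr : ∀ x ∈ S, g x ≠ r) {x y : E} (hx : x ∈ S) (hy : y ∈ S) (hxr : r < g x) : r < g y := by
  by_contra! hyr
  obtain ⟨w, hw, hgw⟩ := hS.intermediate_value hy hx hg ⟨hyr, hxr.le⟩
  exact hr w hw hgw

section SignCells

variable {E ι : Type*} [AddCommGroup E] [Module ℝ E]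

def signCell (f : ι → E →ₗ[ℝ] ℝ) (c : ι → ℝ) (s : ι → Bool) : Set E :=
  {x | ∀ i, if s i then c i < f i x else f i x < c i}

def signVectors (f : ι → E →ₗ[ℝ] ℝ) (c : ι → ℝ) : Set (ι → Bool) :=
  {s | (signCell f c s).Nonempty}

theorem convex_signCell (f : ι → E →ₗ[ℝ] ℝ) (c : ι → ℝ) (s : ι → Bool) :
    Convex ℝ (signCell f c s) := by
  have : signCell f c s = ⋂ i, {x | if s i then c i < f i x else f i x < c i} := by
    ext; simp [signCell]
  rw [this]
  refine convex_iInter fun i => ?_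
  cases s i
  · exact convex_halfSpace_lt (f i).isLinear _
  · exact convex_halfSpace_gt (f i).isLinear _

theorem signCell_subset (f : ι → E →ₗ[ℝ] ℝ) (c : ι → ℝ) (s : ι → Bool) :
    signCell f c s ⊆ {x | ∀ i, f i x ≠ c i} := by
  intro x hx i
  have := hx i
  split_ifs at this <;> [exact this.ne'; exact this.ne]

theorem mem_signCell_decide {f : ι → E →ₗ[ℝ] ℝ} {c : ι → ℝ} {z : E} (hz : ∀ i, f i z ≠ c i) :
    z ∈ signCell f c (fun i => decide (c i < f i z)) := by
  intro i
  by_cases h : c i < f i z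
  · simp [h]
  · simpa [h] using lt_of_le_of_ne (not_lt.mp h) (hz i)

theorem connectedComponentIn_eq_signCell [TopologicalSpace E] [ContinuousAdd E]
    [ContinuousSMul ℝ E] {f : ι → E →ₗ[ℝ] ℝ} (hf : ∀ i, Continuous (f i)) (c : ι → ℝ) {z : E}
    (hz : ∀ i, f i z ≠ c i) :
    connectedComponentIn {x | ∀ i, f i x ≠ c i} z
      = signCell f c (fun i => decide (c i < f i z)) := by
  set K := connectedComponentIn {x | ∀ i, f i x ≠ c i} z
  refine subset_antisymm (fun y hy i => ?_) ((convex_signCell f c _).isPreconnected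
    |>.subset_connectedComponentIn (mem_signCell_decide hz) (signCell_subset f c _))
  have hK : IsPreconnected K := isPreconnected_connectedComponentIn
  have hzK : z ∈ K := mem_connectedComponentIn hz
  have hKi : ∀ x ∈ K, f i x ≠ c i := fun x hx => connectedComponentIn_subset _ _ hx i
  have hyi := hKi y hy
  by_cases h : c i < f i z
  · simpa [h] using hK.lt_of_lt_of_forall_ne (hf i).continuousOn hKi hzK hy h
  · simp only [h, decide_false, Bool.false_eq_true, if_false]
    by_contra hyc
    exact h (hK.lt_of_lt_of_forall_ne (hf i).continuousOn hKi hy hzK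
      (lt_of_le_of_ne (not_lt.mp hyc) hyi.symm))

end SignCells

section Counting

variable {E : Type*} [AddCommGroup E] [Module ℝ E]

theorem image_tail_signVectors_subset {m : ℕ} (f : Fin (m + 1) → E →ₗ[ℝ] ℝ)
    (c : Fin (m + 1) → ℝ) :
    Fin.tail '' signVectors f c ⊆ signVectors (Fin.tail f) (Fin.tail c) := by
  rintro _ ⟨s, ⟨x, hx⟩, rfl⟩
  exact ⟨x, fun i => hx i.succ⟩

theorem mem_signVectors_ker {m : ℕ} {f : Fin (m + 1) → E →ₗ[ℝ] ℝ} {c : Fin (m + 1) → ℝ}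
    {p : E} (hp : f 0 p = c 0) {t : Fin m → Bool}
    (htrue : Fin.cons true t ∈ signVectors f c) (hfalse : Fin.cons false t ∈ signVectors f c) :
    t ∈ signVectors (fun i => (f i.succ).comp (LinearMap.ker (f 0)).subtype)
      (fun i => c i.succ - f i.succ p) := by
  obtain ⟨x, hx⟩ := htrue
  obtain ⟨y, hy⟩ := hfalse
  have hx0 : c 0 < f 0 x := by simpa using hx 0
  have hy0 : f 0 y < c 0 := by simpa using hy 0
  obtain ⟨z, hz, hz0⟩ := (convex_signCell (Fin.tail f) (Fin.tail c) t).exists_mem_eq_of_lt_of_lt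
    (f 0) (fun i => by simpa [Fin.tail] using hy i.succ)
    (fun i => by simpa [Fin.tail] using hx i.succ) hy0 hx0
  refine ⟨⟨z - p, by simp [hz0, hp]⟩, fun i => ?_⟩
  have := hz i
  simp only [Fin.tail] at this
  simp only [LinearMap.coe_comp, Function.comp_apply, Submodule.coe_subtype, map_sub]
  split_ifs at this ⊢ <;> linarith

theorem ncard_signVectors_le [FiniteDimensional ℝ E] {m : ℕ} (f : Fin m → E →ₗ[ℝ] ℝ)
    (c : Fin m → ℝ) :
    (signVectors f c).ncard ≤ ∑ j ∈ Finset.range (Module.finrank ℝ E + 1), m.choose j := by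
  induction m generalizing E with
  | zero =>
    calc (signVectors f c).ncard ≤ (Set.univ : Set (Fin 0 → Bool)).ncard :=
          Set.ncard_le_ncard (Set.subset_univ _)
      _ = ∑ j ∈ Finset.range (Module.finrank ℝ E + 1), Nat.choose 0 j := by
          simp [Finset.sum_range_succ']
  | succ m ih =>
    have htail : (Fin.tail '' signVectors f c).ncard
        ≤ ∑ j ∈ Finset.range (Module.finrank ℝ E + 1), m.choose j :=
      (Set.ncard_le_ncard (image_tail_signVectors_subset f c)).trans (ih _ _)
    have hboth :
        {t | Fin.cons true t ∈ signVectors f c ∧ Fin.cons false t ∈ signVectors f c}.ncard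
          ≤ ∑ j ∈ Finset.range (Module.finrank ℝ E), m.choose j := by
      by_cases h0 : f 0 = 0
      · suffices h : {t | Fin.cons true t ∈ signVectors f c ∧
            Fin.cons false t ∈ signVectors f c} = ∅ by simp [h]
        refine Set.eq_empty_of_forall_notMem fun t ⟨⟨x, hx⟩, ⟨y, hy⟩⟩ => ?_
        have hx0 := hx 0
        have hy0 := hy 0
        simp only [Fin.cons_zero, if_true, Bool.false_eq_true, if_false, h0,
          LinearMap.zero_apply] at hx0 hy0
        linarith
      · obtain ⟨p, hp⟩ := LinearMap.surjective h0 (c 0)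
        rw [← Module.Dual.finrank_ker_add_one_of_ne_zero h0]
        exact (Set.ncard_le_ncard fun t ht => mem_signVectors_ker hp ht.1 ht.2).trans (ih _ _)
    calc (signVectors f c).ncard
        ≤ (Fin.tail '' signVectors f c).ncard
          + {t | Fin.cons true t ∈ signVectors f c ∧ Fin.cons false t ∈ signVectors f c}.ncard :=
          Set.ncard_le_ncard_image_tail_add _
      _ ≤ _ := add_le_add htail hboth
      _ = _ := (Nat.sum_range_succ_choose_succ m _).symm

end Counting

theorem hyperplane_arrangement_cells_general (D m : ℕ)
    (a : Fin m → EuclideanSpace ℝ (Fin D)) (c : Fin m → ℝ) :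
    {C : Set (EuclideanSpace ℝ (Fin D)) |
        ∃ z, z ∈ (⋃ i, {y : EuclideanSpace ℝ (Fin D) | inner ℝ (a i) y = (c i : ℝ)})ᶜ ∧
          C = connectedComponentIn
              ((⋃ i, {y : EuclideanSpace ℝ (Fin D) | inner ℝ (a i) y = (c i : ℝ)})ᶜ) z}.ncard
      ≤ ∑ j ∈ Finset.range (D + 1), m.choose j := by
  set f : Fin m → EuclideanSpace ℝ (Fin D) →ₗ[ℝ] ℝ := fun i => (innerSL ℝ (a i)).toLinearMap
  have hX : (⋃ i, {y : EuclideanSpace ℝ (Fin D) | inner ℝ (a i) y = c i})ᶜ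
      = {y | ∀ i, f i y ≠ c i} := by
    ext; simp [f]
  have hcells : {C | ∃ z ∈ {y | ∀ i, f i y ≠ c i},
      C = connectedComponentIn {y | ∀ i, f i y ≠ c i} z} ⊆ signCell f c '' signVectors f c := by
    rintro _ ⟨z, hz, rfl⟩
    exact ⟨_, ⟨z, mem_signCell_decide hz⟩,
      (connectedComponentIn_eq_signCell (fun i => (innerSL ℝ (a i)).continuous) c hz).symm⟩
  rw [hX]
  calc _ ≤ (signCell f c '' signVectors f c).ncard := Set.ncard_le_ncard hcells
    _ ≤ (signVectors f c).ncard := Set.ncard_image_le (Set.toFinite _)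
    _ ≤ _ := ncard_signVectors_le f c
    _ = _ := by rw [finrank_euclideanSpace_fin]

/-- an arrangement of m hyperplanes in ℝ^D has at most
∑_{j=0}^{D} C(m,j) connected regions (connected components of the complement). -/
theorem hyperplane_arrangement_cells (D m : ℕ)
    (a : Fin m → EuclideanSpace ℝ (Fin D)) (c : Fin m → ℝ) (ha : ∀ i, a i ≠ 0) :
    {C : Set (EuclideanSpace ℝ (Fin D)) |
        ∃ z, z ∈ (⋃ i, {y : EuclideanSpace ℝ (Fin D) | inner ℝ (a i) y = (c i : ℝ)})ᶜ ∧
          C = connectedComponentIn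
              ((⋃ i, {y : EuclideanSpace ℝ (Fin D) | inner ℝ (a i) y = (c i : ℝ)})ᶜ) z}.ncard
      ≤ ∑ j ∈ Finset.range (D + 1), m.choose j :=
  hyperplane_arrangement_cells_general D m a c
end

section
/- Let $f, f_k : \mathcal{X} \to \mathbb{R}$, let $x_0 \in \mathcal{X}$, and suppose there exist $\check{C}, \hat{C}, \tilde{r} > 0$ and $\varepsilon \ge 0$ such that: (i) $\sup_{x \in \mathcal{X} \setminus B(x_0,\tilde{r})} f_k(x) \le \sup_{x \in \mathcal{X} \setminus B(x_0,\tilde{r}/2)} f(x) + \varepsilon$; (ii) $\inf_{x \in B(x_0, r_n)} f_k(x) \ge \inf_{x \in B(x_0, c\tilde{r})} f(x) - \varepsilon$ where $r_n \le c\tilde{r}/2$ and $0 < c \le 1$; (iii) $f(x_0) - f(x) \ge \check{C}|x-x_0|^2$ and $f(x_0) - f(x) \le \hat{C}|x-x_0|^2$ on the relevant regions; and (iv) $\check{C}(\tilde{r}/2)^2 > \hat{C}(c\tilde{r})^2 + 2\varepsilon$. If $\hat{x} \in X$ maximizes $f_k$ over the sample $X$, and $X$ contains a point within distance $r_n$ of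 $x_0$, then $|\hat{x} - x_0| \le \tilde{r}$. -/
open Metric Finset

/-- mode-estimation argument: the sample maximizer of f_k lies within
r̃ of the true maximizer x0. -/
theorem sample_maximizer_close (Dd : ℕ) (𝒳 : Set (EuclideanSpace ℝ (Fin Dd)))
    (f fk : EuclideanSpace ℝ (Fin Dd) → ℝ)
    (x0 : EuclideanSpace ℝ (Fin Dd)) (hx0 : x0 ∈ 𝒳)
    (cC CC rt rn c ε : ℝ)
    (hcC : 0 < cC) (hCC : 0 < CC) (hrt : 0 < rt) (hε : 0 ≤ ε)
    (hc0 : 0 < c) (hc1 : c ≤ 1) (hrn : 0 ≤ rn) (hrnc : rn ≤ c * rt / 2)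
    -- (i) upper bound on f_k outside B(x0, r̃)
    (hi : ∀ x ∈ 𝒳, rt < dist x x0 →
      fk x ≤ sSup (f '' (𝒳 \ closedBall x0 (rt / 2))) + ε)
    -- (ii) lower bound on f_k on B(x0, rn)
    (hii : ∀ x ∈ closedBall x0 rn ∩ 𝒳,
      sInf (f '' (closedBall x0 (c * rt) ∩ 𝒳)) - ε ≤ fk x)
    -- (iii) two-sided quadratic bounds around x0
    (hiii : ∀ x ∈ 𝒳, cC * dist x x0 ^ 2 ≤ f x0 - f x ∧ f x0 - f x ≤ CC * dist x x0 ^ 2)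
    -- (iv) saliency condition
    (hiv : CC * (c * rt) ^ 2 + 2 * ε < cC * (rt / 2) ^ 2)
    (X : Finset (EuclideanSpace ℝ (Fin Dd))) (hXne : X.Nonempty)
    (hX𝒳 : ∀ z ∈ X, z ∈ 𝒳)
    (hsample : ∃ z ∈ X, dist z x0 ≤ rn)
    (xhat : EuclideanSpace ℝ (Fin Dd)) (hxhatX : xhat ∈ X)
    (hxhat : ∀ z ∈ X, fk z ≤ fk xhat) :
    dist xhat x0 ≤ rt := by
  by_contra hfar
  push_neg at hfar
  have hxhat𝒳 : xhat ∈ 𝒳 := hX𝒳 xhat hxhatX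
  obtain ⟨z, hzX, hzdist⟩ := hsample
  have hz𝒳 : z ∈ 𝒳 := hX𝒳 z hzX
  -- bound the sup
  have hsup : sSup (f '' (𝒳 \ closedBall x0 (rt / 2))) ≤ f x0 - cC * (rt / 2) ^ 2 := by
    apply csSup_le
    · exact ⟨f xhat, xhat, ⟨hxhat𝒳, by
        simp only [mem_closedBall, not_le]
        linarith⟩, rfl⟩
    · rintro y ⟨x, ⟨hx𝒳, hxball⟩, rfl⟩
      simp only [Metric.mem_closedBall, not_le] at hxball
      have h1 := (hiii x hx𝒳).1
      have hsq : (rt / 2) ^ 2 ≤ dist x x0 ^ 2 := by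
        apply pow_le_pow_left₀ (by linarith) (le_of_lt hxball)
      nlinarith
  -- bound the inf
  have hinf : f x0 - CC * (c * rt) ^ 2 ≤ sInf (f '' (closedBall x0 (c * rt) ∩ 𝒳)) := by
    apply le_csInf
    · exact ⟨f x0, x0, ⟨by simp [Metric.mem_closedBall]; positivity, hx0⟩, rfl⟩
    · rintro y ⟨x, ⟨hxball, hx𝒳⟩, rfl⟩
      simp only [Metric.mem_closedBall] at hxball
      have h2 := (hiii x hx𝒳).2
      have hsq : dist x x0 ^ 2 ≤ (c * rt) ^ 2 :=
        pow_le_pow_left₀ dist_nonneg hxball 2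
      nlinarith
  have hzball : z ∈ closedBall x0 rn ∩ 𝒳 := ⟨by simpa [Metric.mem_closedBall] using hzdist, hz𝒳⟩
  have h3 := hii z hzball
  have h4 := hxhat z hzX
  have h5 := hi xhat hxhat𝒳 hfar
  linarith
end
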